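/- arXiv:2112.05745 — 3 statements merged into one kernel-verified Lean document; each statement's English description precedes it below -/
import Mathlib

section
/- Let 𝒳 ⊆ ℝ^p be a set whose complement is r-convex for some r > 0 (for every x ∈ ∂𝒳 there exists x̃ with x ∈ closedBall(x̃, r) ⊆ 𝒳). Let P_𝒳 be a probability measure on ℝ^p with P_𝒳(𝒳) = 1 that satisfies the density lower bound P_𝒳(A) ≥ p₀·λ(A) for every measurable A ⊆ 𝒳, where p₀ > 0 and λ is Lebesgue measure. Let ε, L > 0 and r⃗ = (r, 0, …, 0) ∈ ℝ^p. Then for every x ∈ ∂𝒳, P_𝒳(closedBall(x, ε/(2L))) ≥ p₀ · λ(closedBall(0, ε/(2L)) ∩ closedBall(r⃗, r)). -/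
/-!
At a boundary point `x`, `r`-convexity of the complement gives a ball `closedBall xt r ⊆ 𝒳`
with `x` on its sphere, since `x` is not interior to `𝒳`. With `δ = ε / (2 * L)`, the lens
`closedBall x δ ∩ closedBall xt r` lies in `𝒳`, so the density bound applies to it, and a rigid
motion sending `(x, xt)` to `(0, r⃗)` shows that its volume is that of the reference lens.
-/

open MeasureTheory Metric

lemma dist_eq_of_closedBall_subset_of_notMem_interior {α : Type*} [PseudoMetricSpace α]
    {s : Set α} {c x : α} {r : ℝ} (hx : x ∈ closedBall c r) (hs : closedBall c r ⊆ s)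
    (hxs : x ∉ interior s) : dist x c = r :=
  le_antisymm hx <| not_lt.1 fun h =>
    hxs <| interior_maximal (ball_subset_closedBall.trans hs) isOpen_ball h

section InnerProductSpace

variable {E : Type*} [NormedAddCommGroup E] [InnerProductSpace ℝ E] [FiniteDimensional ℝ E]
  [MeasurableSpace E] [BorelSpace E]

lemma exists_isometry_measurePreserving_map_pair {x y x' y' : E}
    (h : dist x y = dist x' y') :
    ∃ f : E → E, Isometry f ∧ MeasurePreserving f ∧ f x = x' ∧ f y = y' := by
  set O := Submodule.reflection (ℝ ∙ ((y - x) - (y' - x')))ᗮ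
  have hO : O (y - x) = y' - x' :=
    Submodule.reflection_sub (by rw [← dist_eq_norm, ← dist_eq_norm, dist_comm, h, dist_comm])
  refine ⟨fun z => x' + O (z - x), ?_, ?_, by simp, by simp [hO]⟩
  · refine Isometry.of_dist_eq fun z w => ?_
    rw [dist_eq_norm, dist_eq_norm, add_sub_add_left_eq_sub, ← map_sub, sub_sub_sub_cancel_right,
      O.norm_map]
  · exact (measurePreserving_add_left volume x').comp
      (O.measurePreserving.comp (measurePreserving_sub_right volume x))

lemma volume_closedBall_inter_closedBall_eq_of_dist_eq {x y x' y' : E}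
    (h : dist x y = dist x' y') (δ r : ℝ) :
    volume (closedBall x δ ∩ closedBall y r) = volume (closedBall x' δ ∩ closedBall y' r) := by
  obtain ⟨f, hf, hmp, rfl, rfl⟩ := exists_isometry_measurePreserving_map_pair h
  rw [← hf.preimage_closedBall x δ, ← hf.preimage_closedBall y r, ← Set.preimage_inter,
    hmp.measure_preimage (measurableSet_closedBall.inter measurableSet_closedBall).nullMeasurableSet]

end InnerProductSpace

theorem measure_ball_ge_of_rconvex_density_general {p : ℕ} (hp : 0 < p)
    (𝒳 : Set (EuclideanSpace ℝ (Fin p)))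
    (r : ℝ)
    (hrconv : ∀ x' ∈ frontier 𝒳, ∃ xt,
      x' ∈ Metric.closedBall xt r ∧ Metric.closedBall xt r ⊆ 𝒳)
    (P𝒳 : Measure (EuclideanSpace ℝ (Fin p)))
    (p₀ : ℝ)
    (hdens : ∀ A ⊆ 𝒳, MeasurableSet A → ENNReal.ofReal p₀ * volume A ≤ P𝒳 A)
    (ε L : ℝ)
    (rvec : EuclideanSpace ℝ (Fin p)) (hrvec : rvec = EuclideanSpace.single (⟨0, hp⟩ : Fin p) r)
    (x : EuclideanSpace ℝ (Fin p)) (hx : x ∈ frontier 𝒳) :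
    ENNReal.ofReal p₀ *
        volume (Metric.closedBall (0 : EuclideanSpace ℝ (Fin p)) (ε / (2 * L)) ∩
          Metric.closedBall rvec r) ≤
      P𝒳 (Metric.closedBall x (ε / (2 * L))) := by
  obtain ⟨xt, hx_mem, hsub⟩ := hrconv x hx
  have hdist : dist x xt = r :=
    dist_eq_of_closedBall_subset_of_notMem_interior hx_mem hsub hx.2
  have hdist_ref : dist 0 rvec = dist x xt := by
    rw [hrvec, dist_zero_left, PiLp.norm_single, Real.norm_eq_abs,
      abs_of_nonneg (hdist ▸ dist_nonneg), hdist]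
  calc ENNReal.ofReal p₀ * volume (closedBall 0 (ε / (2 * L)) ∩ closedBall rvec r)
      = ENNReal.ofReal p₀ * volume (closedBall x (ε / (2 * L)) ∩ closedBall xt r) := by
        rw [volume_closedBall_inter_closedBall_eq_of_dist_eq hdist_ref]
    _ ≤ P𝒳 (closedBall x (ε / (2 * L)) ∩ closedBall xt r) :=
        hdens _ (Set.inter_subset_right.trans hsub)
          (measurableSet_closedBall.inter measurableSet_closedBall)
    _ ≤ P𝒳 (closedBall x (ε / (2 * L))) := measure_mono Set.inter_subset_left

/-- **Ball-mass lower bound from r-convexity and a density lower bound.**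
If the complement of `𝒳` is `r`-convex and `P𝒳 ≥ p₀·λ` on measurable subsets of `𝒳`
with `P𝒳(𝒳) = 1`, then for any boundary point `x ∈ ∂𝒳`,
`P𝒳(closedBall x (ε/(2L))) ≥ p₀ · λ(closedBall 0 (ε/(2L)) ∩ closedBall r⃗ r)`. -/
theorem measure_ball_ge_of_rconvex_density {p : ℕ} (hp : 0 < p)
    (𝒳 : Set (EuclideanSpace ℝ (Fin p)))
    (r : ℝ) (hr : 0 < r)
    (hrconv : ∀ x' ∈ frontier 𝒳, ∃ xt,
      x' ∈ Metric.closedBall xt r ∧ Metric.closedBall xt r ⊆ 𝒳)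
    (P𝒳 : Measure (EuclideanSpace ℝ (Fin p))) [IsProbabilityMeasure P𝒳]
    (hsupp : P𝒳 𝒳 = 1)
    (p₀ : ℝ) (hp₀ : 0 < p₀)
    (hdens : ∀ A ⊆ 𝒳, MeasurableSet A → ENNReal.ofReal p₀ * volume A ≤ P𝒳 A)
    (ε L : ℝ) (hε : 0 < ε) (hL : 0 < L)
    (rvec : EuclideanSpace ℝ (Fin p)) (hrvec : rvec = EuclideanSpace.single (⟨0, hp⟩ : Fin p) r)
    (x : EuclideanSpace ℝ (Fin p)) (hx : x ∈ frontier 𝒳) :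
    ENNReal.ofReal p₀ *
        volume (Metric.closedBall (0 : EuclideanSpace ℝ (Fin p)) (ε / (2 * L)) ∩
          Metric.closedBall rvec r) ≤
      P𝒳 (Metric.closedBall x (ε / (2 * L))) :=
  measure_ball_ge_of_rconvex_density_general hp 𝒳 r hrconv P𝒳 p₀ hdens ε L rvec hrvec x hx
end

section
/- Let 𝒳 ⊆ ℝ^p be nonempty compact, f : ℝ^p → ℝ^n be L-Lipschitz on 𝒳 with L > 0, and 𝒴 = f(𝒳); assume ∂𝒴 ⊆ f(∂𝒳). Let ε > 0 and suppose ∂𝒳 can be covered by N closed balls of radius ε/(2L) centered at points of ∂𝒳. Let x_1, …, x_M be i.i.d. random variables with common law P_𝒳 satisfying P_𝒳(𝒳) = 1 and P_𝒳(closedBall(x, ε/(2L))) ≥ Λ for all x ∈ ∂𝒳, for some Λ > 0. Then, with probability at least 1 − N·(1 − Λ)^M, the boundary of the reachable set is covered by the ε-balls around the output samples: ∂𝒴 ⊆ ⋃_{i=1}^M closedBall(f(x_i), ε). -/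
open MeasureTheory ProbabilityTheory Metric

/-!
If every ball `closedBall (a j) r` of a cover of `∂𝒳` contains a sample of `𝒳`, then every
boundary point of `𝒳` is within `2r` of a sample, so by the Lipschitz bound every point of
`f(∂𝒳) ⊇ ∂𝒴` is within `2Lr = ε` of an output sample. A fixed ball is missed by all `M`
independent samples with probability at most `(1 - Λ)^M`, and a union bound over the `N`
balls of the cover gives the estimate.
-/

theorem image_subset_iUnion_closedBall_of_forall_exists_mem
    {α β ι κ : Type*} [PseudoMetricSpace α] [PseudoMetricSpace β]
    {f : α → β} {K : NNReal} {S s : Set α} (hf : LipschitzOnWith K f S) (hs : s ⊆ S)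
    {a : κ → α} {r : ℝ} (hcov : s ⊆ ⋃ j, closedBall (a j) r)
    {y : ι → α} (hy : ∀ j, ∃ i, y i ∈ closedBall (a j) r ∩ S) :
    f '' s ⊆ ⋃ i, closedBall (f (y i)) (K * (2 * r)) := by
  rintro _ ⟨z, hz, rfl⟩
  obtain ⟨j, hzj⟩ := Set.mem_iUnion.mp (hcov hz)
  obtain ⟨i, hij, hiS⟩ := hy j
  have hdist : dist z (y i) ≤ 2 * r := by
    linarith [dist_triangle_right z (y i) (a j), mem_closedBall.mp hzj, mem_closedBall.mp hij]
  refine Set.mem_iUnion.mpr ⟨i, mem_closedBall.mpr ?_⟩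
  calc dist (f z) (f (y i)) ≤ K * dist z (y i) := hf.dist_le_mul z (hs hz) (y i) hiS
    _ ≤ K * (2 * r) := by gcongr

theorem one_sub_ofReal_le_ofReal_one_sub (Λ : ℝ) :
    1 - ENNReal.ofReal Λ ≤ ENNReal.ofReal (1 - Λ) := by
  rw [tsub_le_iff_right]
  calc (1 : ENNReal) = ENNReal.ofReal (1 - Λ + Λ) := by simp
    _ ≤ ENNReal.ofReal (1 - Λ) + ENNReal.ofReal Λ := ENNReal.ofReal_add_le

theorem one_sub_pow_le_ofReal_one_sub_pow {a : ENNReal} {Λ : ℝ} (ha : a ≤ 1)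
    (hΛa : ENNReal.ofReal Λ ≤ a) (m : ℕ) :
    (1 - a) ^ m ≤ ENNReal.ofReal ((1 - Λ) ^ m) := by
  have hΛ : Λ ≤ 1 := ENNReal.ofReal_le_one.mp (hΛa.trans ha)
  rw [ENNReal.ofReal_pow (sub_nonneg.mpr hΛ)]
  gcongr
  exact (tsub_le_tsub_left hΛa 1).trans (one_sub_ofReal_le_ofReal_one_sub Λ)

section IndependentSamples

variable {Ω E ι : Type*} [MeasurableSpace Ω] [MeasurableSpace E] [Fintype ι]
  {μ : Measure Ω} [IsProbabilityMeasure μ] {x : ι → Ω → E} {ν : Measure E}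

theorem measure_forall_notMem_eq (hx : ∀ i, Measurable (x i)) (hind : iIndepFun x μ)
    (hlaw : ∀ i, μ.map (x i) = ν) {B : Set E} (hB : MeasurableSet B) :
    μ {ω | ∀ i, x i ω ∉ B} = (1 - ν B) ^ Fintype.card ι := by
  have hmiss : ∀ i, μ (x i ⁻¹' B)ᶜ = 1 - ν B := fun i => by
    rw [prob_compl_eq_one_sub (hx i hB), ← Measure.map_apply (hx i) hB, hlaw i]
  calc μ {ω | ∀ i, x i ω ∉ B} = μ (⋂ i, (x i ⁻¹' B)ᶜ) := by congr 1; ext; simp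
    _ = ∏ i, μ (x i ⁻¹' B)ᶜ := hind.meas_iInter fun i => ⟨Bᶜ, hB.compl, rfl⟩
    _ = (1 - ν B) ^ Fintype.card ι := by simp [hmiss]

theorem ofReal_one_sub_le_measure_forall_exists_mem [IsProbabilityMeasure ν]
    (hx : ∀ i, Measurable (x i)) (hind : iIndepFun x μ) (hlaw : ∀ i, μ.map (x i) = ν)
    {κ : Type*} [Fintype κ] {B : κ → Set E} (hB : ∀ j, MeasurableSet (B j)) {Λ : ℝ}
    (hΛ : ∀ j, ENNReal.ofReal Λ ≤ ν (B j)) :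
    ENNReal.ofReal (1 - Fintype.card κ * (1 - Λ) ^ Fintype.card ι) ≤
      μ {ω | ∀ j, ∃ i, x i ω ∈ B j} := by
  set q := (1 - Λ) ^ Fintype.card ι
  have hq : ∀ j ∈ Finset.univ, 0 ≤ q := fun j _ => pow_nonneg
    (sub_nonneg.mpr (ENNReal.ofReal_le_one.mp ((hΛ j).trans prob_le_one))) _
  have hmiss : ∀ j, μ {ω | ∀ i, x i ω ∉ B j} ≤ ENNReal.ofReal q := fun j => by
    rw [measure_forall_notMem_eq hx hind hlaw (hB j)]
    exact one_sub_pow_le_ofReal_one_sub_pow prob_le_one (hΛ j) _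
  have hcompl : {ω | ∀ j, ∃ i, x i ω ∈ B j}ᶜ = ⋃ j, {ω | ∀ i, x i ω ∉ B j} := by
    ext; simp
  calc ENNReal.ofReal (1 - Fintype.card κ * q) = ENNReal.ofReal (1 - ∑ _j : κ, q) := by simp
    _ = 1 - ∑ _j : κ, ENNReal.ofReal q := by
      rw [ENNReal.ofReal_sub _ (Finset.sum_nonneg hq), ENNReal.ofReal_sum_of_nonneg hq,
        ENNReal.ofReal_one]
    _ ≤ 1 - ∑ j, μ {ω | ∀ i, x i ω ∉ B j} :=
      tsub_le_tsub_left (Finset.sum_le_sum fun j _ => hmiss j) 1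
    _ ≤ 1 - μ {ω | ∀ j, ∃ i, x i ω ∈ B j}ᶜ := by
      rw [hcompl]; exact tsub_le_tsub_left (measure_iUnion_fintype_le μ _) 1
    _ ≤ μ {ω | ∀ j, ∃ i, x i ω ∈ B j} := by
      rw [tsub_le_iff_right, ← measure_univ (μ := μ)]
      exact measure_univ_le_add_compl _

end IndependentSamples

theorem randup_boundary_coverage_general {p n M N : ℕ}
    (𝒳 : Set (EuclideanSpace ℝ (Fin p))) (h𝒳c : IsCompact 𝒳)
    (f : EuclideanSpace ℝ (Fin p) → EuclideanSpace ℝ (Fin n))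
    (L : ℝ) (hL : 0 < L)
    (hf : ∀ x₁ ∈ 𝒳, ∀ x₂ ∈ 𝒳, ‖f x₁ - f x₂‖ ≤ L * ‖x₁ - x₂‖)
    (hbd : frontier (f '' 𝒳) ⊆ f '' frontier 𝒳)
    (ε : ℝ)
    (a : Fin N → EuclideanSpace ℝ (Fin p)) (ha : ∀ i, a i ∈ frontier 𝒳)
    (hcov : frontier 𝒳 ⊆ ⋃ i, Metric.closedBall (a i) (ε / (2 * L)))
    {Ω : Type*} [MeasureSpace Ω] [IsProbabilityMeasure (ℙ : Measure Ω)]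
    (x : Fin M → Ω → EuclideanSpace ℝ (Fin p)) (hxmeas : ∀ i, Measurable (x i))
    (P𝒳 : Measure (EuclideanSpace ℝ (Fin p))) [IsProbabilityMeasure P𝒳]
    (hlaw : ∀ i, Measure.map (x i) ℙ = P𝒳)
    (hindep : iIndepFun x ℙ)
    (hsupp : P𝒳 𝒳 = 1)
    (Λ : ℝ)
    (hball : ∀ x' ∈ frontier 𝒳, ENNReal.ofReal Λ ≤ P𝒳 (Metric.closedBall x' (ε / (2 * L)))) :
    ENNReal.ofReal (1 - N * (1 - Λ) ^ M) ≤
      ℙ {ω | frontier (f '' 𝒳) ⊆ ⋃ i, Metric.closedBall (f (x i ω)) ε} := by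
  set r := ε / (2 * L)
  have h𝒳 : IsClosed 𝒳 := h𝒳c.isClosed
  have hlip : LipschitzOnWith L.toNNReal f 𝒳 := .of_dist_le_mul fun x₁ h₁ x₂ h₂ => by
    simpa [dist_eq_norm, Real.coe_toNNReal _ hL.le] using hf x₁ h₁ x₂ h₂
  have hradius : (L.toNNReal : ℝ) * (2 * r) = ε := by
    rw [Real.coe_toNNReal _ hL.le]; simp only [r]; field_simp
  have hhit : ∀ j, ENNReal.ofReal Λ ≤ P𝒳 (closedBall (a j) r ∩ 𝒳) := fun j => by
    rw [measure_inter_conull ((prob_compl_eq_zero_iff h𝒳.measurableSet).mpr hsupp)]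
    exact hball _ (ha j)
  calc ENNReal.ofReal (1 - N * (1 - Λ) ^ M)
      ≤ ℙ {ω | ∀ j, ∃ i, x i ω ∈ closedBall (a j) r ∩ 𝒳} := by
        simpa using ofReal_one_sub_le_measure_forall_exists_mem hxmeas hindep hlaw
          (fun j => measurableSet_closedBall.inter h𝒳.measurableSet) hhit
    _ ≤ _ := measure_mono fun ω hω => hradius ▸ hbd.trans
        (image_subset_iUnion_closedBall_of_forall_exists_mem hlip h𝒳.frontier_subset hcov hω)

/-- **Probabilistic boundary coverage of the reachable set.**
With probability at least `1 − N·(1 − Λ)^M`, the boundary of the reachable set `f '' 𝒳`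
is covered by the closed `ε`-balls around the output samples `f (x_i)`. -/
theorem randup_boundary_coverage {p n M N : ℕ}
    (𝒳 : Set (EuclideanSpace ℝ (Fin p))) (h𝒳ne : 𝒳.Nonempty) (h𝒳c : IsCompact 𝒳)
    (f : EuclideanSpace ℝ (Fin p) → EuclideanSpace ℝ (Fin n))
    (L : ℝ) (hL : 0 < L)
    (hf : ∀ x₁ ∈ 𝒳, ∀ x₂ ∈ 𝒳, ‖f x₁ - f x₂‖ ≤ L * ‖x₁ - x₂‖)
    (hbd : frontier (f '' 𝒳) ⊆ f '' frontier 𝒳)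
    (ε : ℝ) (hε : 0 < ε)
    (a : Fin N → EuclideanSpace ℝ (Fin p)) (ha : ∀ i, a i ∈ frontier 𝒳)
    (hcov : frontier 𝒳 ⊆ ⋃ i, Metric.closedBall (a i) (ε / (2 * L)))
    {Ω : Type*} [MeasureSpace Ω] [IsProbabilityMeasure (ℙ : Measure Ω)]
    (x : Fin M → Ω → EuclideanSpace ℝ (Fin p)) (hxmeas : ∀ i, Measurable (x i))
    (P𝒳 : Measure (EuclideanSpace ℝ (Fin p))) [IsProbabilityMeasure P𝒳]
    (hlaw : ∀ i, Measure.map (x i) ℙ = P𝒳)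
    (hindep : iIndepFun x ℙ)
    (hsupp : P𝒳 𝒳 = 1)
    (Λ : ℝ) (hΛ : 0 < Λ)
    (hball : ∀ x' ∈ frontier 𝒳, ENNReal.ofReal Λ ≤ P𝒳 (Metric.closedBall x' (ε / (2 * L)))) :
    ENNReal.ofReal (1 - N * (1 - Λ) ^ M) ≤
      ℙ {ω | frontier (f '' 𝒳) ⊆ ⋃ i, Metric.closedBall (f (x i ω)) ε} :=
  randup_boundary_coverage_general 𝒳 h𝒳c f L hL hf hbd ε a ha hcov x hxmeas P𝒳 hlaw hindep hsupp Λ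
    hball
end

section
/- Let 𝒳 ⊆ ℝ^p be nonempty compact, f : ℝ^p → ℝ^n continuous, and 𝒴 = f(𝒳). Let (x_i)_{i≥1} be i.i.d. random variables with common law P_𝒳 satisfying P_𝒳(𝒳) = 1 and the boundary-positivity condition: for every y ∈ ∂𝒴 and every r > 0, P_𝒳({x ∈ 𝒳 : f(x) lies in the open ball of center y and radius r}) > 0. Let ε̄ ≥ 0 and (ε_M)_{M≥1} with ε_M ≥ 0 and ε_M → ε̄, and define Ŷ^M = convexHull({f(x_1), …, f(x_M)}) ⊕ closedBall(0, ε_M). Then for every open set G ⊆ ℝ^n with G ∩ (convexHull(𝒴) ⊕ closedBall(0, ε̄)) ≠ ∅, the probability that Ŷ^M ∩ G = ∅ for infinitely many M is zero. -/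
open MeasureTheory ProbabilityTheory Metric Filter Pointwise

/-!
A compact set lies in the convex hull of its frontier: cut it by a line through the point and take
the two extreme points of the section. Hence a point `c + e` of `G`, with `c ∈ convexHull 𝒴` and
`‖e‖ ≤ ε̄`, stays in `G` when `c` is replaced by any convex combination of points close enough to
finitely many frontier points `z_j` of `𝒴`. Every ball around a `z_j` has positive probability, so by
the second Borel–Cantelli lemma almost surely some sample lands in each of them; from then on the
sample hull contains a fixed point `h` with `h + e ∈ G`, and `e` is approximated by vectors of norm
at most `ε_M`.
-/

open Set Topology
open scoped ENNReal

theorem IsLeast.mem_frontier {α : Type*} [TopologicalSpace α] [LinearOrder α] [OrderTopology α]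
    [DenselyOrdered α] [NoMinOrder α] {s : Set α} {a : α} (h : IsLeast s a) : a ∈ frontier s :=
  (mem_frontier_iff_notMem_interior h.1).2 fun ha => lt_irrefl a <| show a ∈ Ioi a from
    (interior_Ici (a := a)) ▸ interior_mono (t := Ici a) (fun _ hx => h.2 hx) ha

theorem IsGreatest.mem_frontier {α : Type*} [TopologicalSpace α] [LinearOrder α] [OrderTopology α]
    [DenselyOrdered α] [NoMaxOrder α] {s : Set α} {a : α} (h : IsGreatest s a) :
    a ∈ frontier s :=
  IsLeast.mem_frontier (α := αᵒᵈ) h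

section TopologicalVectorSpace

variable {E : Type*} [AddCommGroup E] [Module ℝ E] [TopologicalSpace E] [IsTopologicalAddGroup E]
  [ContinuousSMul ℝ E] [T2Space E]

theorem IsCompact.exists_mem_frontier_mem_segment {s : Set E} (hs : IsCompact s) {y : E}
    (hy : y ∈ s) {v : E} (hv : v ≠ 0) :
    ∃ a ∈ frontier s, ∃ b ∈ frontier s, y ∈ segment ℝ a b := by
  set φ : ℝ →ᵃ[ℝ] E := AffineMap.lineMap y (v + y)
  have hφ : ⇑φ = fun t : ℝ => t • v + y := by
    ext t; simp [φ, AffineMap.lineMap_apply]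
  have hφ_emb : IsClosedEmbedding φ := hφ ▸
    (Homeomorph.addRight y).isClosedEmbedding.comp (isClosedEmbedding_smul_left hv)
  have hφ_fr := hφ_emb.continuous.frontier_preimage_subset s
  have hA : IsCompact (φ ⁻¹' s) := hφ_emb.isCompact_preimage hs
  have h0 : (0 : ℝ) ∈ φ ⁻¹' s := by simpa [hφ] using hy
  obtain ⟨a, ha⟩ := hA.exists_isLeast ⟨0, h0⟩
  obtain ⟨b, hb⟩ := hA.exists_isGreatest ⟨0, h0⟩
  refine ⟨φ a, hφ_fr ha.mem_frontier, φ b, hφ_fr hb.mem_frontier, ?_⟩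
  rw [← image_segment, segment_eq_Icc (ha.2 hb.1)]
  exact ⟨0, ⟨ha.2 h0, hb.2 h0⟩, by simp [hφ]⟩

theorem IsCompact.convexHull_frontier [Nontrivial E] {s : Set E} (hs : IsCompact s) :
    convexHull ℝ (frontier s) = convexHull ℝ s := by
  refine (convexHull_mono (hs.isClosed.frontier_subset)).antisymm
    (convexHull_min (fun y hy => ?_) (convex_convexHull ℝ _))
  obtain ⟨v, hv⟩ := exists_ne (0 : E)
  obtain ⟨a, ha, b, hb, hy⟩ := hs.exists_mem_frontier_mem_segment hy hv
  exact (convex_convexHull ℝ _).segment_subset (subset_convexHull ℝ _ ha)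
    (subset_convexHull ℝ _ hb) hy

end TopologicalVectorSpace

section NormedSpace

variable {E : Type*} [NormedAddCommGroup E] [NormedSpace ℝ E]

theorem exists_finset_forall_inter_ball_nonempty_convexHull_inter_nonempty {s U : Set E}
    (hU : IsOpen U) (hsU : (convexHull ℝ s ∩ U).Nonempty) :
    ∃ t : Finset E, ↑t ⊆ s ∧ ∃ r > 0, ∀ S : Set E, (∀ z ∈ t, (S ∩ ball z r).Nonempty) →
      (convexHull ℝ S ∩ U).Nonempty := by
  obtain ⟨c, hc, hcU⟩ := hsU
  obtain ⟨r, hr, hrU⟩ := Metric.isOpen_iff.1 hU c hcU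
  rw [convexHull_eq_union_convexHull_finite_subsets, mem_iUnion₂] at hc
  obtain ⟨t, hts, hct⟩ := hc
  obtain ⟨w, hw₀, hw₁, rfl⟩ := Finset.mem_convexHull'.1 hct
  refine ⟨t, hts, r, hr, fun S hS => ?_⟩
  choose! y hyS hyz using hS
  refine ⟨∑ z ∈ t, w z • y z, (convex_convexHull ℝ S).sum_mem hw₀ hw₁
    fun z hz => subset_convexHull ℝ S (hyS z hz), hrU ?_⟩
  have hdiff : ∑ z ∈ t, w z • (y z - z) ∈ ball (0 : E) r :=
    (convex_ball 0 r).sum_mem hw₀ hw₁ fun z hz =>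
      mem_ball_zero_iff.2 (mem_ball_iff_norm.1 (hyz z hz))
  rw [mem_ball_iff_norm, ← Finset.sum_sub_distrib, ← mem_ball_zero_iff]
  simpa only [smul_sub] using hdiff

theorem exists_tendsto_forall_mem_closedBall {ι : Type*} {l : Filter ι} {ε : ι → ℝ} {ε₀ : ℝ}
    (hε : ∀ i, 0 ≤ ε i) (hlim : Tendsto ε l (𝓝 ε₀)) {e : E} (he : ‖e‖ ≤ ε₀) :
    ∃ u : ι → E, Tendsto u l (𝓝 e) ∧ ∀ i, u i ∈ closedBall 0 (ε i) := by
  rcases (norm_nonneg e |>.trans he).eq_or_lt with h0 | h0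
  · rw [← h0, norm_le_zero_iff] at he
    exact ⟨0, he ▸ tendsto_const_nhds, fun i => mem_closedBall_self (hε i)⟩
  refine ⟨fun i => (ε i / ε₀) • e, ?_, fun i => ?_⟩
  · simpa [div_self h0.ne'] using (hlim.div_const ε₀).smul_const e
  have hratio : 0 ≤ ε i / ε₀ := div_nonneg (hε i) h0.le
  rw [mem_closedBall_zero_iff, norm_smul, Real.norm_of_nonneg hratio]
  calc ε i / ε₀ * ‖e‖ ≤ ε i / ε₀ * ε₀ := by gcongr
    _ = ε i := div_mul_cancel₀ _ h0.ne'

end NormedSpace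

theorem ae_frequently_mem_of_iIndepFun {Ω α : Type*} [MeasurableSpace Ω] {μ : Measure Ω}
    [MeasurableSpace α] {x : ℕ → Ω → α} (hx : ∀ i, Measurable (x i)) (hindep : iIndepFun x μ)
    {ν : Measure α} (hlaw : ∀ i, μ.map (x i) = ν) {B : Set α} (hB : MeasurableSet B)
    (hpos : 0 < ν B) : ∀ᵐ ω ∂μ, ∃ᶠ i in atTop, x i ω ∈ B := by
  have := hindep.isProbabilityMeasure
  have hsm : ∀ i, MeasurableSet (x i ⁻¹' B) := fun i => hx i hB
  have hset : iIndepSet (fun i => x i ⁻¹' B) μ :=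
    (iIndepSet_iff_meas_biInter hsm).2 fun _ => hindep.meas_biInter fun i _ => ⟨B, hB, rfl⟩
  have hsum : ∑' i, μ (x i ⁻¹' B) = ∞ := by
    simp_rw [← Measure.map_apply (hx _) hB, hlaw]
    exact ENNReal.tsum_const_eq_top_of_ne_zero hpos.ne'
  have hlimsup := measure_limsup_eq_one hsm hset hsum
  rw [← measure_univ (μ := μ)] at hlimsup
  filter_upwards [(ae_mem_iff_measure_eq
    (MeasurableSet.measurableSet_limsup hsm).nullMeasurableSet).2 hlimsup] with ω hω
  exact mem_limsup_iff_frequently_mem.1 hω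

theorem padded_hull_meets_open_sets_general {p n : ℕ}
    (𝒳 : Set (EuclideanSpace ℝ (Fin p))) (h𝒳c : IsCompact 𝒳)
    (f : EuclideanSpace ℝ (Fin p) → EuclideanSpace ℝ (Fin n)) (hf : Continuous f)
    {Ω : Type*} [MeasureSpace Ω]
    (x : ℕ → Ω → EuclideanSpace ℝ (Fin p)) (hxmeas : ∀ i, Measurable (x i))
    (P𝒳 : Measure (EuclideanSpace ℝ (Fin p)))
    (hlaw : ∀ i, Measure.map (x i) ℙ = P𝒳)
    (hindep : iIndepFun x ℙ)
    (hbd : ∀ y ∈ frontier (f '' 𝒳), ∀ r > 0,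
      0 < P𝒳 {x' ∈ 𝒳 | f x' ∈ Metric.ball y r})
    (εbar : ℝ)
    (εs : ℕ → ℝ) (hεs : ∀ M, 0 ≤ εs M)
    (hεlim : Tendsto εs atTop (nhds εbar))
    (G : Set (EuclideanSpace ℝ (Fin n))) (hG : IsOpen G)
    (hGne : (G ∩ (convexHull ℝ (f '' 𝒳) +
      Metric.closedBall (0 : EuclideanSpace ℝ (Fin n)) εbar)).Nonempty) :
    ℙ {ω | ∀ M₀ : ℕ, ∃ M ≥ M₀,
        (convexHull ℝ ((fun i => f (x i ω)) '' Set.Iio M) +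
          Metric.closedBall (0 : EuclideanSpace ℝ (Fin n)) (εs M)) ∩ G = ∅} = 0 := by
  obtain ⟨_, hgG, c, hc, e, he, rfl⟩ := hGne
  obtain ⟨u, hu, hu_mem⟩ :=
    exists_tendsto_forall_mem_closedBall hεs hεlim (mem_closedBall_zero_iff.1 he)
  suffices hhit : ∀ᵐ ω ∂ℙ, ∃ N, ∃ h ∈ convexHull ℝ ((fun i => f (x i ω)) '' Iio N), h + e ∈ G by
    refine measure_mono_null (fun ω hω => ?_) (ae_iff.1 hhit)
    rintro ⟨N, h, hN, hhG⟩
    obtain ⟨M₀, hM₀⟩ := eventually_atTop.1 ((hu.const_add h).eventually (hG.mem_nhds hhG))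
    obtain ⟨M, hM, hmiss⟩ := hω (max N M₀)
    refine hmiss.subset ⟨add_mem_add ?_ (hu_mem M), hM₀ M (le_of_max_le_right hM)⟩
    exact convexHull_mono (image_mono (Iio_subset_Iio (le_of_max_le_left hM))) hN
  rcases subsingleton_or_nontrivial (EuclideanSpace ℝ (Fin n)) with hn | hn
  · exact ae_of_all _ fun ω => ⟨1, f (x 0 ω), subset_convexHull ℝ _ ⟨0, Nat.zero_lt_one, rfl⟩,
      by rwa [Subsingleton.elim (f (x 0 ω) + e) (c + e)]⟩
  obtain ⟨t, ht, r, hr, ht_hull⟩ :=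
    exists_finset_forall_inter_ball_nonempty_convexHull_inter_nonempty
      (hG.preimage (continuous_add_const e))
      ⟨c, (h𝒳c.image hf).convexHull_frontier.symm ▸ hc, hgG⟩
  have hvisit : ∀ z ∈ t, ∀ᵐ ω ∂ℙ, ∃ i, f (x i ω) ∈ ball z r := fun z hz =>
    (ae_frequently_mem_of_iIndepFun hxmeas hindep hlaw
      (h𝒳c.measurableSet.inter (hf.measurable measurableSet_ball)) (hbd z (ht hz) r hr)).mono
      fun ω hω => hω.exists.imp fun i hi => hi.2
  filter_upwards [(eventually_all_finset t).2 hvisit] with ω hω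
  choose! i hi using hω
  exact ⟨t.sup i + 1, ht_hull _ fun z hz =>
    ⟨_, ⟨i z, Nat.lt_succ_of_le (Finset.le_sup hz), rfl⟩, hi z hz⟩⟩

/-- **Condition (C2): the padded hull almost surely eventually meets every open set
intersecting the limit.** For every open `G` intersecting
`convexHull (f '' 𝒳) ⊕ closedBall 0 ε̄`, the probability that the padded convex hull of
the first `M` output samples misses `G` for infinitely many `M` is zero. -/
theorem padded_hull_meets_open_sets {p n : ℕ}
    (𝒳 : Set (EuclideanSpace ℝ (Fin p))) (h𝒳ne : 𝒳.Nonempty) (h𝒳c : IsCompact 𝒳)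
    (f : EuclideanSpace ℝ (Fin p) → EuclideanSpace ℝ (Fin n)) (hf : Continuous f)
    {Ω : Type*} [MeasureSpace Ω] [IsProbabilityMeasure (ℙ : Measure Ω)]
    (x : ℕ → Ω → EuclideanSpace ℝ (Fin p)) (hxmeas : ∀ i, Measurable (x i))
    (P𝒳 : Measure (EuclideanSpace ℝ (Fin p))) [IsProbabilityMeasure P𝒳]
    (hlaw : ∀ i, Measure.map (x i) ℙ = P𝒳)
    (hindep : iIndepFun x ℙ)
    (hsupp : P𝒳 𝒳 = 1)
    (hbd : ∀ y ∈ frontier (f '' 𝒳), ∀ r > 0,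
      0 < P𝒳 {x' ∈ 𝒳 | f x' ∈ Metric.ball y r})
    (εbar : ℝ) (hεbar : 0 ≤ εbar)
    (εs : ℕ → ℝ) (hεs : ∀ M, 0 ≤ εs M)
    (hεlim : Tendsto εs atTop (nhds εbar))
    (G : Set (EuclideanSpace ℝ (Fin n))) (hG : IsOpen G)
    (hGne : (G ∩ (convexHull ℝ (f '' 𝒳) +
      Metric.closedBall (0 : EuclideanSpace ℝ (Fin n)) εbar)).Nonempty) :
    ℙ {ω | ∀ M₀ : ℕ, ∃ M ≥ M₀,
        (convexHull ℝ ((fun i => f (x i ω)) '' Set.Iio M) +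
          Metric.closedBall (0 : EuclideanSpace ℝ (Fin n)) (εs M)) ∩ G = ∅} = 0 :=
  padded_hull_meets_open_sets_general 𝒳 h𝒳c f hf x hxmeas P𝒳 hlaw hindep hbd εbar εs hεs hεlim G hG
    hGne
end
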